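/- Let u, v : M → ℝ² be smooth on a neighbourhood of the closure of M and L-periodic in the horizontal variables x and y, and assume ∫_{-h}^{0} div u(x,y,z) dz = 0 for all (x,y) ∈ M₀. Then for every real q ≥ 0 one has the weighted cancellation property ∫_M B₂(u,v)(x,y,z) · |v(x,y,z)|^q v(x,y,z) dM = 0, where |v(x,y,z)| denotes the pointwise Euclidean norm of v. -/

import Mathlib

open MeasureTheory Set

noncomputable section

/-- The domain `M = (0,L) × (0,L) × (-h,0) ⊆ ℝ³`. -/
def Mset (L h : ℝ) : Set (ℝ × ℝ × ℝ) := Ioo 0 L ×ˢ Ioo 0 L ×ˢ Ioo (-h) 0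

/-- `f` is smooth on an open neighbourhood of the closure of `M`. -/
def SmoothNearM (L h : ℝ) (f : ℝ → ℝ → ℝ → ℝ) : Prop :=
  ∃ U : Set (ℝ × ℝ × ℝ), IsOpen U ∧ closure (Mset L h) ⊆ U ∧
    ContDiffOn ℝ (⊤ : ℕ∞) (fun p : ℝ × ℝ × ℝ => f p.1 p.2.1 p.2.2) U

/-- Partial derivative in `x`. -/
def pdx (f : ℝ → ℝ → ℝ → ℝ) : ℝ → ℝ → ℝ → ℝ := fun x y z => deriv (fun t => f t y z) x
/-- Partial derivative in `y`. -/
def pdy (f : ℝ → ℝ → ℝ → ℝ) : ℝ → ℝ → ℝ → ℝ := fun x y z => deriv (fun t => f x t z) y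
/-- Partial derivative in `z`. -/
def pdz (f : ℝ → ℝ → ℝ → ℝ) : ℝ → ℝ → ℝ → ℝ := fun x y z => deriv (fun t => f x y t) z

/-- Iterated integral over `M`. -/
def intM (L h : ℝ) (g : ℝ → ℝ → ℝ → ℝ) : ℝ :=
  ∫ x in Ioo (0:ℝ) L, ∫ y in Ioo (0:ℝ) L, ∫ z in Ioo (-h) (0:ℝ), g x y z

/-- Square of the `L²(M)` norm. -/
def sqL2 (L h : ℝ) (f : ℝ → ℝ → ℝ → ℝ) : ℝ := intM L h fun x y z => (f x y z) ^ 2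

/-- Square of the `L²(M)` norm of the full (three-dimensional) gradient. -/
def gradSq (L h : ℝ) (f : ℝ → ℝ → ℝ → ℝ) : ℝ :=
  sqL2 L h (pdx f) + sqL2 L h (pdy f) + sqL2 L h (pdz f)

/-- Square of the `H¹(M)` norm of a scalar function. -/
def H1sq (L h : ℝ) (f : ℝ → ℝ → ℝ → ℝ) : ℝ := sqL2 L h f + gradSq L h f

/-- Square of the `H²(M)` norm of a scalar function
(`L²` norms of all partial derivatives up to order two). -/
def H2sq (L h : ℝ) (f : ℝ → ℝ → ℝ → ℝ) : ℝ :=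
  H1sq L h f + gradSq L h (pdx f) + gradSq L h (pdy f) + gradSq L h (pdz f)

/-- The `L²(M)` norm `|U|` of a pair `U = (v, T)` with `v = (v1, v2)`. -/
def L2triple (L h : ℝ) (v1 v2 T : ℝ → ℝ → ℝ → ℝ) : ℝ :=
  Real.sqrt (sqL2 L h v1 + sqL2 L h v2 + sqL2 L h T)

/-- The `H¹(M)` norm `‖U‖` of a pair `U = (v, T)` with `v = (v1, v2)`. -/
def H1triple (L h : ℝ) (v1 v2 T : ℝ → ℝ → ℝ → ℝ) : ℝ :=
  Real.sqrt (H1sq L h v1 + H1sq L h v2 + H1sq L h T)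

/-- The `H²(M)` norm `‖U‖_{H²}` of a pair `U = (v, T)` with `v = (v1, v2)`. -/
def H2triple (L h : ℝ) (v1 v2 T : ℝ → ℝ → ℝ → ℝ) : ℝ :=
  Real.sqrt (H2sq L h v1 + H2sq L h v2 + H2sq L h T)

/-- The vertical velocity `w(v)(x,y,z) = -∫_{-h}^z div v(x,y,z') dz'`. -/
def wvel (h : ℝ) (v1 v2 : ℝ → ℝ → ℝ → ℝ) : ℝ → ℝ → ℝ → ℝ :=
  fun x y z => -(∫ t in (-h)..z, (pdx v1 x y t + pdy v2 x y t))

/-- A component of `B₂(u, v) = (u·∇)v + w(u) ∂_z v`, applied to a scalar component `g`. -/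
def B2comp (h : ℝ) (u1 u2 g : ℝ → ℝ → ℝ → ℝ) : ℝ → ℝ → ℝ → ℝ :=
  fun x y z =>
    u1 x y z * pdx g x y z + u2 x y z * pdy g x y z + wvel h u1 u2 x y z * pdz g x y z

/-- The trilinear form `b(U, U♯, U♭)` for pairs `U = (v1, v2, T)`, `U♯ = (s1, s2, sT)`,
`U♭ = (b1, b2, bT)`. -/
def bform (L h : ℝ) (v1 v2 T s1 s2 sT b1 b2 bT : ℝ → ℝ → ℝ → ℝ) : ℝ :=
  intM L h fun x y z =>
    B2comp h v1 v2 s1 x y z * b1 x y z + B2comp h v1 v2 s2 x y z * b2 x y z +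
      B2comp h v1 v2 sT x y z * bT x y z

/-- `f` is `L`-periodic in the horizontal variables `x` and `y`. -/
def PeriodicXY (L : ℝ) (f : ℝ → ℝ → ℝ → ℝ) : Prop :=
  ∀ x y z : ℝ, f (x + L) y z = f x y z ∧ f x (y + L) z = f x y z

/-- `∫_{-h}^{0} div v (x,y,z) dz = 0` for all `(x,y) ∈ M₀`. -/
def BarotropicDivFree (L h : ℝ) (v1 v2 : ℝ → ℝ → ℝ → ℝ) : Prop :=
  ∀ x ∈ Ioo (0:ℝ) L, ∀ y ∈ Ioo (0:ℝ) L,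
    (∫ z in (-h)..(0:ℝ), (pdx v1 x y z + pdy v2 x y z)) = 0

/-!
With `E = |v|^(q+2)/(q+2)` one has `∂E = |v|^q v·∂v` for each partial derivative `∂`, so the
integrand `B₂(u,v)·|v|^q v = u₁ ∂ₓE + u₂ ∂ᵧE + w ∂_zE` equals
`∂ₓ(u₁E) + ∂ᵧ(u₂E) + ∂_z(wE)`: the terms `(∂ₓu₁ + ∂ᵧu₂) E` cancel against `(∂_z w) E` because
`∂_z w = -div u`. The first two derivatives integrate to zero by horizontal periodicity, the third
because `w` vanishes at `z = -h` by definition and at `z = 0` by the constraint on `∫ div u dz`.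
-/

def uncurry3 (f : ℝ → ℝ → ℝ → ℝ) (p : ℝ × ℝ × ℝ) : ℝ := f p.1 p.2.1 p.2.2

theorem ContDiffOn.hasDerivAt_comp_of_mem {E G : Type*} [NormedAddCommGroup E]
    [NormedSpace ℝ E] [NormedAddCommGroup G] [NormedSpace ℝ G] {U : Set E} {f : E → G}
    {γ : ℝ → E} {e : E} {t : ℝ} (hf : ContDiffOn ℝ 1 f U) (hU : IsOpen U) (ht : γ t ∈ U)
    (hγ : HasDerivAt γ e t) : HasDerivAt (f ∘ γ) (fderiv ℝ f (γ t) e) t :=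
  ((hf.contDiffAt (hU.mem_nhds ht)).differentiableAt one_ne_zero).hasFDerivAt.comp_hasDerivAt t hγ

theorem ContDiffOn.continuousOn_fderiv_apply {E G : Type*} [NormedAddCommGroup E]
    [NormedSpace ℝ E] [NormedAddCommGroup G] [NormedSpace ℝ G] {U : Set E} {f : E → G}
    (hf : ContDiffOn ℝ 1 f U) (hU : IsOpen U) (e : E) :
    ContinuousOn (fun p => fderiv ℝ f p e) U :=
  (hf.continuousOn_fderiv_of_isOpen hU le_rfl).clm_apply continuousOn_const

section PartialDerivatives

variable {U : Set (ℝ × ℝ × ℝ)} {f : ℝ → ℝ → ℝ → ℝ} {x y z : ℝ}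
  (hU : IsOpen U) (hf : ContDiffOn ℝ 1 (uncurry3 f) U)
include hU hf

theorem hasDerivAt_fderiv_x (hp : (x, y, z) ∈ U) :
    HasDerivAt (fun t => f t y z) (fderiv ℝ (uncurry3 f) (x, y, z) (1, 0, 0)) x :=
  hf.hasDerivAt_comp_of_mem hU hp ((hasDerivAt_id x).prodMk (hasDerivAt_const x (y, z)))

theorem hasDerivAt_fderiv_y (hp : (x, y, z) ∈ U) :
    HasDerivAt (fun t => f x t z) (fderiv ℝ (uncurry3 f) (x, y, z) (0, 1, 0)) y :=
  hf.hasDerivAt_comp_of_mem hU hp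
    ((hasDerivAt_const y x).prodMk ((hasDerivAt_id y).prodMk (hasDerivAt_const y z)))

theorem hasDerivAt_fderiv_z (hp : (x, y, z) ∈ U) :
    HasDerivAt (fun t => f x y t) (fderiv ℝ (uncurry3 f) (x, y, z) (0, 0, 1)) z :=
  hf.hasDerivAt_comp_of_mem hU hp
    ((hasDerivAt_const z x).prodMk ((hasDerivAt_const z y).prodMk (hasDerivAt_id z)))

theorem hasDerivAt_pdx (hp : (x, y, z) ∈ U) : HasDerivAt (fun t => f t y z) (pdx f x y z) x :=
  (hasDerivAt_fderiv_x hU hf hp).differentiableAt.hasDerivAt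

theorem hasDerivAt_pdy (hp : (x, y, z) ∈ U) : HasDerivAt (fun t => f x t z) (pdy f x y z) y :=
  (hasDerivAt_fderiv_y hU hf hp).differentiableAt.hasDerivAt

theorem hasDerivAt_pdz (hp : (x, y, z) ∈ U) : HasDerivAt (fun t => f x y t) (pdz f x y z) z :=
  (hasDerivAt_fderiv_z hU hf hp).differentiableAt.hasDerivAt

theorem continuousOn_pdx : ContinuousOn (uncurry3 (pdx f)) U :=
  (hf.continuousOn_fderiv_apply hU _).congr fun _ hp => (hasDerivAt_fderiv_x hU hf hp).deriv

theorem continuousOn_pdy : ContinuousOn (uncurry3 (pdy f)) U :=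
  (hf.continuousOn_fderiv_apply hU _).congr fun _ hp => (hasDerivAt_fderiv_y hU hf hp).deriv

theorem continuousOn_pdz : ContinuousOn (uncurry3 (pdz f)) U :=
  (hf.continuousOn_fderiv_apply hU _).congr fun _ hp => (hasDerivAt_fderiv_z hU hf hp).deriv

end PartialDerivatives

def energy (q b c : ℝ) : ℝ := √(b ^ 2 + c ^ 2) ^ (q + 2) / (q + 2)

def fluxDensity (q a a' b b' c c' : ℝ) : ℝ :=
  a' * energy q b c + a * (√(b ^ 2 + c ^ 2) ^ q * (b * b' + c * c'))

section EnergyDerivative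

variable {q t a' b' c' : ℝ} {a b c : ℝ → ℝ}

theorem hasDerivAt_energy (hq : 0 ≤ q) (hb : HasDerivAt b b' t) (hc : HasDerivAt c c' t) :
    HasDerivAt (fun s => energy q (b s) (c s))
      (√(b t ^ 2 + c t ^ 2) ^ q * (b t * b' + c t * c')) t := by
  have hq2 : q + 2 ≠ 0 := by positivity
  have hS : HasDerivAt (fun s => b s ^ 2 + c s ^ 2) (2 * b t * b' + 2 * c t * c') t := by
    refine ((hb.fun_pow 2).add (hc.fun_pow 2)).congr_deriv ?_
    ring
  have hpow := ((Real.hasDerivAt_rpow_const (x := b t ^ 2 + c t ^ 2) (p := (q + 2) / 2)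
    (Or.inr (by linarith))).comp t hS).div_const (q + 2)
  have hS0 : ∀ s, 0 ≤ b s ^ 2 + c s ^ 2 := fun s => by positivity
  have hfun : (fun s => energy q (b s) (c s)) =
      fun s => (b s ^ 2 + c s ^ 2) ^ ((q + 2) / 2) / (q + 2) := by
    funext s
    rw [energy, Real.rpow_div_two_eq_sqrt _ (hS0 s)]
  rw [hfun]
  refine hpow.congr_deriv ?_
  rw [show (q + 2) / 2 - 1 = q / 2 by ring, Real.rpow_div_two_eq_sqrt _ (hS0 t)]
  field_simp

theorem hasDerivAt_mul_energy (hq : 0 ≤ q) (ha : HasDerivAt a a' t) (hb : HasDerivAt b b' t)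
    (hc : HasDerivAt c c' t) :
    HasDerivAt (fun s => a s * energy q (b s) (c s)) (fluxDensity q (a t) a' (b t) b' (c t) c') t :=
  ha.mul (hasDerivAt_energy hq hb hc)

end EnergyDerivative

theorem ContinuousOn.fluxDensity {X : Type*} [TopologicalSpace X] {S : Set X} {q : ℝ}
    {a a' b b' c c' : X → ℝ} (hq : 0 ≤ q) (ha : ContinuousOn a S) (ha' : ContinuousOn a' S)
    (hb : ContinuousOn b S) (hb' : ContinuousOn b' S) (hc : ContinuousOn c S)
    (hc' : ContinuousOn c' S) :
    ContinuousOn (fun p => fluxDensity q (a p) (a' p) (b p) (b' p) (c p) (c' p)) S := by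
  have hnorm : ContinuousOn (fun p => √(b p ^ 2 + c p ^ 2)) S :=
    Real.continuous_sqrt.comp_continuousOn ((hb.pow 2).add (hc.pow 2))
  exact (ha'.mul ((hnorm.rpow_const fun _ _ => Or.inr (by linarith)).div_const _)).add
    (ha.mul ((hnorm.rpow_const fun _ _ => Or.inr hq).mul ((hb.mul hb').add (hc.mul hc'))))

-- `a'` stands for `D a`; it is a separate argument because for `a = w` we use `∂_z w = -div u`.
def fluxDeriv (D : (ℝ → ℝ → ℝ → ℝ) → ℝ → ℝ → ℝ → ℝ) (q : ℝ) (a a' v1 v2 : ℝ → ℝ → ℝ → ℝ) :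
    ℝ → ℝ → ℝ → ℝ := fun x y z =>
  fluxDensity q (a x y z) (a' x y z) (v1 x y z) (D v1 x y z) (v2 x y z) (D v2 x y z)

def horizDiv (u1 u2 : ℝ → ℝ → ℝ → ℝ) : ℝ → ℝ → ℝ → ℝ := fun x y z => pdx u1 x y z + pdy u2 x y z

theorem rpow_mul_B2comp_eq_sum_fluxDeriv (q h : ℝ) (u1 u2 v1 v2 : ℝ → ℝ → ℝ → ℝ) (x y z : ℝ) :
    √(v1 x y z ^ 2 + v2 x y z ^ 2) ^ q *
        (B2comp h u1 u2 v1 x y z * v1 x y z + B2comp h u1 u2 v2 x y z * v2 x y z) =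
      fluxDeriv pdx q u1 (pdx u1) v1 v2 x y z + fluxDeriv pdy q u2 (pdy u2) v1 v2 x y z +
        fluxDeriv pdz q (wvel h u1 u2) (-horizDiv u1 u2) v1 v2 x y z := by
  simp only [fluxDeriv, fluxDensity, B2comp, horizDiv, Pi.neg_apply]
  ring

theorem integral_Ioo_eq_zero_of_hasDerivAt {F f : ℝ → ℝ} {a b : ℝ} (hab : a ≤ b)
    (hF : ∀ t ∈ Icc a b, HasDerivAt F (f t) t) (hf : ContinuousOn f (Icc a b))
    (hFab : F a = F b) : ∫ t in Ioo a b, f t = 0 := by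
  rw [← integral_Ioc_eq_integral_Ioo, ← intervalIntegral.integral_of_le hab,
    intervalIntegral.integral_eq_sub_of_hasDerivAt (by rwa [uIcc_of_le hab])
      (hf.intervalIntegrable_of_Icc hab), hFab, sub_self]

theorem PeriodicXY.boundary_x {L : ℝ} {f : ℝ → ℝ → ℝ → ℝ} (hf : PeriodicXY L f) (y z : ℝ) :
    f L y z = f 0 y z := by
  simpa using (hf 0 y z).1

theorem PeriodicXY.boundary_y {L : ℝ} {f : ℝ → ℝ → ℝ → ℝ} (hf : PeriodicXY L f) (x z : ℝ) :
    f x L z = f x 0 z := by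
  simpa using (hf x 0 z).2

theorem ContinuousOn.integrableOn_column {U : Set (ℝ × ℝ × ℝ)} {F : ℝ → ℝ → ℝ → ℝ}
    {x y a b : ℝ} (hF : ContinuousOn (uncurry3 F) U) (hcol : ∀ t ∈ Icc a b, (x, y, t) ∈ U) :
    IntegrableOn (fun t => F x y t) (Ioo a b) :=
  (hF.comp (f := fun t => (x, y, t)) (by fun_prop) hcol).integrableOn_Icc.mono_set
    Ioo_subset_Icc_self

section Fluxes

variable {U : Set (ℝ × ℝ × ℝ)} {q L h x y z : ℝ} {a u1 u2 v1 v2 : ℝ → ℝ → ℝ → ℝ}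
  (hU : IsOpen U) (hq : 0 ≤ q) (hv1 : ContDiffOn ℝ 1 (uncurry3 v1) U)
  (hv2 : ContDiffOn ℝ 1 (uncurry3 v2) U)
include hU hq hv1 hv2

theorem continuousOn_fluxDeriv_pdx (ha : ContDiffOn ℝ 1 (uncurry3 a) U) :
    ContinuousOn (uncurry3 (fluxDeriv pdx q a (pdx a) v1 v2)) U :=
  .fluxDensity hq ha.continuousOn (continuousOn_pdx hU ha) hv1.continuousOn
    (continuousOn_pdx hU hv1) hv2.continuousOn (continuousOn_pdx hU hv2)

theorem continuousOn_fluxDeriv_pdy (ha : ContDiffOn ℝ 1 (uncurry3 a) U) :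
    ContinuousOn (uncurry3 (fluxDeriv pdy q a (pdy a) v1 v2)) U :=
  .fluxDensity hq ha.continuousOn (continuousOn_pdy hU ha) hv1.continuousOn
    (continuousOn_pdy hU hv1) hv2.continuousOn (continuousOn_pdy hU hv2)

theorem integral_fluxDeriv_pdx_eq_zero (hL : 0 ≤ L) (ha : ContDiffOn ℝ 1 (uncurry3 a) U)
    (pa : PeriodicXY L a) (pv1 : PeriodicXY L v1) (pv2 : PeriodicXY L v2)
    (hseg : ∀ t ∈ Icc 0 L, (t, y, z) ∈ U) :
    ∫ x in Ioo 0 L, fluxDeriv pdx q a (pdx a) v1 v2 x y z = 0 :=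
  integral_Ioo_eq_zero_of_hasDerivAt hL (F := fun t => a t y z * energy q (v1 t y z) (v2 t y z))
    (fun t ht => hasDerivAt_mul_energy hq (hasDerivAt_pdx hU ha (hseg t ht))
      (hasDerivAt_pdx hU hv1 (hseg t ht)) (hasDerivAt_pdx hU hv2 (hseg t ht)))
    ((continuousOn_fluxDeriv_pdx hU hq hv1 hv2 ha).comp (by fun_prop) hseg)
    (by simp only [pa.boundary_x, pv1.boundary_x, pv2.boundary_x])

theorem integral_fluxDeriv_pdy_eq_zero (hL : 0 ≤ L) (ha : ContDiffOn ℝ 1 (uncurry3 a) U)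
    (pa : PeriodicXY L a) (pv1 : PeriodicXY L v1) (pv2 : PeriodicXY L v2)
    (hseg : ∀ t ∈ Icc 0 L, (x, t, z) ∈ U) :
    ∫ y in Ioo 0 L, fluxDeriv pdy q a (pdy a) v1 v2 x y z = 0 :=
  integral_Ioo_eq_zero_of_hasDerivAt hL (F := fun t => a x t z * energy q (v1 x t z) (v2 x t z))
    (fun t ht => hasDerivAt_mul_energy hq (hasDerivAt_pdy hU ha (hseg t ht))
      (hasDerivAt_pdy hU hv1 (hseg t ht)) (hasDerivAt_pdy hU hv2 (hseg t ht)))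
    ((continuousOn_fluxDeriv_pdy hU hq hv1 hv2 ha).comp (by fun_prop) hseg)
    (by simp only [pa.boundary_y, pv1.boundary_y, pv2.boundary_y])

end Fluxes

section VerticalFlux

variable {U : Set (ℝ × ℝ × ℝ)} {q h x y z : ℝ} {u1 u2 v1 v2 : ℝ → ℝ → ℝ → ℝ}
  (hU : IsOpen U) (hu1 : ContDiffOn ℝ 1 (uncurry3 u1) U) (hu2 : ContDiffOn ℝ 1 (uncurry3 u2) U)

include hU hu1 hu2 in
theorem continuousOn_horizDiv : ContinuousOn (uncurry3 (horizDiv u1 u2)) U :=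
  (continuousOn_pdx hU hu1).add (continuousOn_pdy hU hu2)

variable (hcol : ∀ t ∈ Icc (-h) 0, (x, y, t) ∈ U)
include hU hu1 hu2 hcol

theorem hasDerivAt_wvel (hz : z ∈ Icc (-h) 0) :
    HasDerivAt (fun t => wvel h u1 u2 x y t) (-horizDiv u1 u2 x y z) z := by
  set V : Set ℝ := (fun t => (x, y, t)) ⁻¹' U
  have hV : IsOpen V := hU.preimage (by fun_prop)
  have hdiv : ContinuousOn (fun t => horizDiv u1 u2 x y t) V :=
    (continuousOn_horizDiv hU hu1 hu2).comp (f := fun t => (x, y, t)) (by fun_prop) fun _ ht => ht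
  have hzV : z ∈ V := hcol z hz
  have hsub : uIcc (-h) z ⊆ V := by
    rw [uIcc_of_le hz.1]
    exact fun t ht => hcol t ⟨ht.1, ht.2.trans hz.2⟩
  exact (intervalIntegral.integral_hasDerivAt_right ((hdiv.mono hsub).intervalIntegrable)
    (hdiv.stronglyMeasurableAtFilter hV z hzV) (hdiv.continuousAt (hV.mem_nhds hzV))).neg

variable (hq : 0 ≤ q) (hv1 : ContDiffOn ℝ 1 (uncurry3 v1) U)
  (hv2 : ContDiffOn ℝ 1 (uncurry3 v2) U)
include hq hv1 hv2

theorem continuousOn_fluxDeriv_pdz :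
    ContinuousOn (fun z => fluxDeriv pdz q (wvel h u1 u2) (-horizDiv u1 u2) v1 v2 x y z)
      (Icc (-h) 0) := by
  have hslice : ∀ {F : ℝ × ℝ × ℝ → ℝ}, ContinuousOn F U →
      ContinuousOn (fun t => F (x, y, t)) (Icc (-h) 0) := fun hF => hF.comp (by fun_prop) hcol
  exact .fluxDensity hq
    (fun t ht => (hasDerivAt_wvel hU hu1 hu2 hcol ht).continuousAt.continuousWithinAt)
    (hslice (continuousOn_horizDiv hU hu1 hu2).neg)
    (hslice hv1.continuousOn) (hslice (continuousOn_pdz hU hv1))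
    (hslice hv2.continuousOn) (hslice (continuousOn_pdz hU hv2))

theorem integral_fluxDeriv_pdz_eq_zero (hh : 0 ≤ h) (hw : wvel h u1 u2 x y 0 = 0) :
    ∫ z in Ioo (-h) 0, fluxDeriv pdz q (wvel h u1 u2) (-horizDiv u1 u2) v1 v2 x y z = 0 :=
  integral_Ioo_eq_zero_of_hasDerivAt (by linarith)
    (F := fun t => wvel h u1 u2 x y t * energy q (v1 x y t) (v2 x y t))
    (fun t ht => hasDerivAt_mul_energy hq (hasDerivAt_wvel hU hu1 hu2 hcol ht)
      (hasDerivAt_pdz hU hv1 (hcol t ht)) (hasDerivAt_pdz hU hv2 (hcol t ht)))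
    (continuousOn_fluxDeriv_pdz hU hu1 hu2 hcol hq hv1 hv2)
    (by rw [hw]; simp [wvel])

theorem integral_add_fluxDeriv_pdz (hh : 0 ≤ h) (hw : wvel h u1 u2 x y 0 = 0) {f : ℝ → ℝ}
    (hf : IntegrableOn f (Ioo (-h) 0)) :
    ∫ z in Ioo (-h) 0, (f z + fluxDeriv pdz q (wvel h u1 u2) (-horizDiv u1 u2) v1 v2 x y z) =
      ∫ z in Ioo (-h) 0, f z := by
  rw [integral_add hf
    ((continuousOn_fluxDeriv_pdz hU hu1 hu2 hcol hq hv1 hv2).integrableOn_Icc.mono_set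
      Ioo_subset_Icc_self),
    integral_fluxDeriv_pdz_eq_zero hU hu1 hu2 hcol hq hv1 hv2 hh hw, add_zero]

end VerticalFlux

section IntegralOverM

variable {L h : ℝ} {F G : ℝ → ℝ → ℝ → ℝ}

theorem closure_Mset (hL : 0 < L) (hh : 0 < h) :
    closure (Mset L h) = Icc 0 L ×ˢ Icc 0 L ×ˢ Icc (-h) 0 := by
  rw [Mset, closure_prod_eq, closure_prod_eq, closure_Ioo hL.ne, closure_Ioo (by linarith)]

theorem integrableOn_Mset (hF : ContinuousOn (uncurry3 F) (closure (Mset L h))) :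
    IntegrableOn (uncurry3 F) (Mset L h) :=
  (hF.integrableOn_compact (Metric.isBounded_Ioo 0 L |>.prod <|
    (Metric.isBounded_Ioo 0 L).prod (Metric.isBounded_Ioo (-h) 0)).isCompact_closure).mono_set
    subset_closure

theorem volume_restrict_Mset (L h : ℝ) :
    volume.restrict (Mset L h) = (volume.restrict (Ioo 0 L)).prod
      ((volume.restrict (Ioo 0 L)).prod (volume.restrict (Ioo (-h) 0))) := by
  rw [Measure.prod_restrict, Measure.prod_restrict, ← Measure.volume_eq_prod,
    ← Measure.volume_eq_prod, Mset]

theorem intM_eq_setIntegral (hF : IntegrableOn (uncurry3 F) (Mset L h)) :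
    intM L h F = ∫ p in Mset L h, uncurry3 F p := by
  rw [IntegrableOn, volume_restrict_Mset] at hF
  rw [volume_restrict_Mset, integral_prod _ hF, intM]
  refine integral_congr_ae ?_
  filter_upwards [hF.prod_right_ae] with x hx
  exact (integral_prod _ hx).symm

theorem intM_add (hF : IntegrableOn (uncurry3 F) (Mset L h))
    (hG : IntegrableOn (uncurry3 G) (Mset L h)) :
    intM L h (fun x y z => F x y z + G x y z) = intM L h F + intM L h G := by
  rw [intM_eq_setIntegral (F := fun x y z => F x y z + G x y z) (hF.add hG),
    intM_eq_setIntegral hF, intM_eq_setIntegral hG]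
  exact integral_add hF hG

theorem intM_eq_zero_of_integral_x (hF : IntegrableOn (uncurry3 F) (Mset L h))
    (h0 : ∀ y ∈ Ioo 0 L, ∀ z ∈ Ioo (-h) 0, ∫ x in Ioo 0 L, F x y z = 0) : intM L h F = 0 := by
  rw [intM_eq_setIntegral hF]
  rw [IntegrableOn, volume_restrict_Mset] at hF
  rw [volume_restrict_Mset, integral_prod_symm _ hF, Measure.prod_restrict,
    ← Measure.volume_eq_prod]
  exact setIntegral_eq_zero_of_forall_eq_zero fun p hp => h0 p.1 hp.1 p.2 hp.2

theorem intM_eq_zero_of_integral_y (hF : IntegrableOn (uncurry3 F) (Mset L h))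
    (h0 : ∀ x ∈ Ioo 0 L, ∀ z ∈ Ioo (-h) 0, ∫ y in Ioo 0 L, F x y z = 0) : intM L h F = 0 := by
  rw [IntegrableOn, volume_restrict_Mset] at hF
  refine integral_eq_zero_of_ae ?_
  filter_upwards [hF.prod_right_ae, ae_restrict_mem measurableSet_Ioo] with x hx hxL
  rw [Pi.zero_apply, integral_integral_swap hx]
  exact setIntegral_eq_zero_of_forall_eq_zero fun z hz => h0 x hxL z hz

theorem intM_congr_integral_z
    (h0 : ∀ x ∈ Ioo 0 L, ∀ y ∈ Ioo 0 L, ∫ z in Ioo (-h) 0, F x y z = ∫ z in Ioo (-h) 0, G x y z) :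
    intM L h F = intM L h G :=
  setIntegral_congr_fun measurableSet_Ioo fun x hx =>
    setIntegral_congr_fun measurableSet_Ioo fun y hy => h0 x hx y hy

end IntegralOverM

theorem SmoothNearM.exists_common_contDiffOn {L h : ℝ} {u1 u2 v1 v2 : ℝ → ℝ → ℝ → ℝ}
    (hu1 : SmoothNearM L h u1) (hu2 : SmoothNearM L h u2) (hv1 : SmoothNearM L h v1)
    (hv2 : SmoothNearM L h v2) :
    ∃ U, IsOpen U ∧ closure (Mset L h) ⊆ U ∧ ContDiffOn ℝ 1 (uncurry3 u1) U ∧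
      ContDiffOn ℝ 1 (uncurry3 u2) U ∧ ContDiffOn ℝ 1 (uncurry3 v1) U ∧
      ContDiffOn ℝ 1 (uncurry3 v2) U := by
  obtain ⟨U₁, hU₁, hK₁, h₁⟩ := hu1
  obtain ⟨U₂, hU₂, hK₂, h₂⟩ := hu2
  obtain ⟨U₃, hU₃, hK₃, h₃⟩ := hv1
  obtain ⟨U₄, hU₄, hK₄, h₄⟩ := hv2
  have hle : (1 : WithTop ℕ∞) ≤ ((⊤ : ℕ∞) : WithTop ℕ∞) := by exact_mod_cast le_top
  refine ⟨U₁ ∩ U₂ ∩ U₃ ∩ U₄, ((hU₁.inter hU₂).inter hU₃).inter hU₄,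
    fun p hp => ⟨⟨⟨hK₁ hp, hK₂ hp⟩, hK₃ hp⟩, hK₄ hp⟩,
    (h₁.of_le hle).mono fun p hp => hp.1.1.1, (h₂.of_le hle).mono fun p hp => hp.1.1.2,
    (h₃.of_le hle).mono fun p hp => hp.1.2, (h₄.of_le hle).mono fun p hp => hp.2⟩

/-- weighted cancellation property for `B₂`:
for smooth, `L`-periodic `u, v : M → ℝ²` with vanishing vertically averaged divergence of `u`,
and every real `q ≥ 0`, `∫_M B₂(u,v) · |v|^q v dM = 0`. -/
theorem stmt12 (L h : ℝ) (hL : 0 < L) (hh : 0 < h)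
    (u1 u2 v1 v2 : ℝ → ℝ → ℝ → ℝ)
    (hu1 : SmoothNearM L h u1) (hu2 : SmoothNearM L h u2)
    (hv1 : SmoothNearM L h v1) (hv2 : SmoothNearM L h v2)
    (pu1 : PeriodicXY L u1) (pu2 : PeriodicXY L u2)
    (pv1 : PeriodicXY L v1) (pv2 : PeriodicXY L v2)
    (hdiv : BarotropicDivFree L h u1 u2) :
    ∀ q : ℝ, 0 ≤ q →
      intM L h (fun x y z =>
        Real.sqrt ((v1 x y z) ^ 2 + (v2 x y z) ^ 2) ^ q *
          (B2comp h u1 u2 v1 x y z * v1 x y z + B2comp h u1 u2 v2 x y z * v2 x y z)) = 0 := by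
  intro q hq
  obtain ⟨U, hU, hKU, hu1, hu2, hv1, hv2⟩ := hu1.exists_common_contDiffOn hu2 hv1 hv2
  have hbox : Icc 0 L ×ˢ Icc 0 L ×ˢ Icc (-h) 0 ⊆ U := closure_Mset hL hh ▸ hKU
  have hX := continuousOn_fluxDeriv_pdx hU hq hv1 hv2 hu1
  have hY := continuousOn_fluxDeriv_pdy hU hq hv1 hv2 hu2
  calc
    _ = intM L h (fun x y z => fluxDeriv pdx q u1 (pdx u1) v1 v2 x y z +
          fluxDeriv pdy q u2 (pdy u2) v1 v2 x y z) := by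
      refine intM_congr_integral_z fun x hx y hy => ?_
      have hcol : ∀ t ∈ Icc (-h) 0, (x, y, t) ∈ U :=
        fun t ht => hbox ⟨Ioo_subset_Icc_self hx, Ioo_subset_Icc_self hy, ht⟩
      simp_rw [rpow_mul_B2comp_eq_sum_fluxDeriv]
      exact integral_add_fluxDeriv_pdz hU hu1 hu2 hcol hq hv1 hv2 hh.le
        (neg_eq_zero.2 (hdiv x hx y hy))
        ((hX.add hY).integrableOn_column (F := fun x y z => _ + _) hcol)
    _ = _ := intM_add (integrableOn_Mset (hX.mono hKU)) (integrableOn_Mset (hY.mono hKU))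
    _ = 0 := by
      rw [intM_eq_zero_of_integral_x (integrableOn_Mset (hX.mono hKU)) fun y hy z hz =>
          integral_fluxDeriv_pdx_eq_zero hU hq hv1 hv2 hL.le hu1 pu1 pv1 pv2
            fun t ht => hbox ⟨ht, Ioo_subset_Icc_self hy, Ioo_subset_Icc_self hz⟩,
        intM_eq_zero_of_integral_y (integrableOn_Mset (hY.mono hKU)) fun x hx z hz =>
          integral_fluxDeriv_pdy_eq_zero hU hq hv1 hv2 hL.le hu2 pu2 pv1 pv2
            fun t ht => hbox ⟨Ioo_subset_Icc_self hx, ht, Ioo_subset_Icc_self hz⟩, add_zero]
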